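/- For 1 ≤ k ≤ 6, the zero set of the left octonion-monogenic function f(z) = Z₁(z)² + ⋯ + Z_k(z)² is exactly the (7−k)-dimensional linear subspace spanned by e_{k+1}, …, e₇; that is, f(z) = 0 if and only if x₀ = x₁ = ⋯ = x_k = 0. -/

import Mathlib

/-!
Write `Zᵢ = xᵢ - x₀eᵢ`. Multiplication is bilinear, so `Zᵢ²` is differentiable with
`∂₀(Zᵢ²) = -(eᵢZᵢ + Zᵢeᵢ)`, `∂ᵢ(Zᵢ²) = 2Zᵢ` and `∂ⱼ(Zᵢ²) = 0` for `j ∉ {0, i}`; since `eᵢ`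
commutes with `Zᵢ`, `D(Zᵢ²) = -(eᵢZᵢ + Zᵢeᵢ) + 2eᵢZᵢ = 0`, and `D` is additive.

Since `eᵢ² = -1`, `Zᵢ² = (xᵢ² - x₀²) - 2x₀xᵢeᵢ`, so `f(z) = 0` says `Σᵢ (xᵢ² - x₀²) = 0` and
`x₀xᵢ = 0` for `i ≤ k`. If `x₀ ≠ 0`, every `xᵢ` vanishes and the real part is `-k x₀² ≠ 0`;
hence `x₀ = 0`, and then `Σᵢ xᵢ² = 0`.
-/

noncomputable section

/-- Octonions as the Cayley–Dickson double of the quaternions. -/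
abbrev O := Quaternion ℝ × Quaternion ℝ

/-- Cayley–Dickson multiplication. -/
def omul (x y : O) : O := (x.1 * y.1 - y.2 * star x.2, star x.1 * y.2 + y.1 * x.2)

/-- Octonionic conjugation. -/
def oconj (x : O) : O := (star x.1, -x.2)

/-- The unit 1 = (1,0). -/
def oone : O := (1, 0)

/-- Euclidean norm. -/
def onorm (x : O) : ℝ := Real.sqrt (‖x.1‖^2 + ‖x.2‖^2)

def qi : Quaternion ℝ := ⟨0,1,0,0⟩
def qj : Quaternion ℝ := ⟨0,0,1,0⟩

/-- The standard octonion basis 1, e₁, …, e₇ with e₁ = (i,0), e₂ = (j,0), e₃ = (0,1),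
    e₄ = e₁e₂, e₅ = e₁e₃, e₆ = e₂e₃, e₇ = (e₁e₂)e₃. -/
def basis8 : Fin 8 → O := ![oone, (qi,0), (qj,0), ((0:Quaternion ℝ),1),
  omul (qi,0) (qj,0), omul (qi,0) (0,1), omul (qj,0) (0,1), omul (omul (qi,0) (qj,0)) (0,1)]

/-- The real coordinates x₀,…,x₇ of z = x₀ + Σ xᵢeᵢ with respect to `basis8`. -/
def coord : Fin 8 → O → ℝ :=
  ![fun z => z.1.re, fun z => z.1.imI, fun z => z.1.imJ, fun z => z.2.re,
    fun z => z.1.imK, fun z => -z.2.imI, fun z => -z.2.imJ, fun z => -z.2.imK]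

/-- Left octonionic Cauchy–Riemann operator D f = ∂f/∂x₀ + Σᵢ eᵢ·(∂f/∂xᵢ). -/
def Dleft (f : O → O) (z : O) : O :=
  fderiv ℝ f z (basis8 0) + ∑ i : Fin 7, omul (basis8 i.succ) (fderiv ℝ f z (basis8 i.succ))

/-- Right octonionic Cauchy–Riemann operator f D = ∂f/∂x₀ + Σᵢ (∂f/∂xᵢ)·eᵢ. -/
def Dright (f : O → O) (z : O) : O :=
  fderiv ℝ f z (basis8 0) + ∑ i : Fin 7, omul (fderiv ℝ f z (basis8 i.succ)) (basis8 i.succ)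

/-- Fueter polynomials Zᵢ(z) = xᵢ − x₀eᵢ. -/
def Zp (i : Fin 8) (z : O) : O := coord i z • oone - coord 0 z • basis8 i
/-- The truncated sum of squares of Fueter polynomials Z₁² + ⋯ + Z_k². -/
def fk (k : ℕ) (z : O) : O :=
  ∑ i : Fin 7, if (i : ℕ) + 1 ≤ k then omul (Zp i.succ z) (Zp i.succ z) else 0

lemma isBilinearMap_omul : IsBilinearMap ℝ omul where
  add_left x y z := by
    simp only [omul, Prod.fst_add, Prod.snd_add, star_add, add_mul, mul_add, Prod.mk_add_mk,
      Prod.mk.injEq]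
    constructor <;> abel
  smul_left c x y := by
    simp [omul, smul_sub, smul_add]
  add_right x y z := by
    simp only [omul, Prod.fst_add, Prod.snd_add, add_mul, mul_add, Prod.mk_add_mk,
      Prod.mk.injEq]
    constructor <;> abel
  smul_right c x y := by
    simp [omul, smul_sub, smul_add]

def omulL : O →L[ℝ] O →L[ℝ] O := isBilinearMap_omul.toContinuousBilinearMap

@[simp] lemma omulL_apply (x y : O) : omulL x y = omul x y := rfl

lemma omul_zero (x : O) : omul x 0 = 0 := map_zero (omulL x)

lemma zero_omul (x : O) : omul 0 x = 0 := by simp [omul]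

lemma omul_add (x y z : O) : omul x (y + z) = omul x y + omul x z :=
  isBilinearMap_omul.add_right x y z

lemma omul_sub (x y z : O) : omul x (y - z) = omul x y - omul x z := map_sub (omulL x) y z

lemma sub_omul (x y z : O) : omul (x - y) z = omul x z - omul y z :=
  congrArg (· z) (map_sub omulL x y)

lemma omul_neg (x y : O) : omul x (-y) = -omul x y := map_neg (omulL x) y

lemma neg_omul (x y : O) : omul (-x) y = -omul x y := congrArg (· y) (map_neg omulL x)

lemma omul_smul (c : ℝ) (x y : O) : omul x (c • y) = c • omul x y :=
  isBilinearMap_omul.smul_right c x y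

lemma smul_omul (c : ℝ) (x y : O) : omul (c • x) y = c • omul x y :=
  isBilinearMap_omul.smul_left c x y

lemma omul_sum {ι : Type*} (s : Finset ι) (x : O) (f : ι → O) :
    omul x (∑ i ∈ s, f i) = ∑ i ∈ s, omul x (f i) :=
  map_sum (omulL x) f s

lemma omul_one (x : O) : omul x oone = x := by simp [omul, oone]

lemma one_omul (x : O) : omul oone x = x := by simp [omul, oone]

@[simp] lemma re_qi : qi.re = 0 := rfl
@[simp] lemma imI_qi : qi.imI = 1 := rfl
@[simp] lemma imJ_qi : qi.imJ = 0 := rfl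
@[simp] lemma imK_qi : qi.imK = 0 := rfl
@[simp] lemma re_qj : qj.re = 0 := rfl
@[simp] lemma imI_qj : qj.imI = 0 := rfl
@[simp] lemma imJ_qj : qj.imJ = 1 := rfl
@[simp] lemma imK_qj : qj.imK = 0 := rfl

lemma coord_basis8 (i j : Fin 8) : coord i (basis8 j) = if i = j then 1 else 0 := by
  fin_cases i <;> fin_cases j <;>
    simp [coord, basis8, omul, oone, Quaternion.re_mul, Quaternion.imI_mul,
      Quaternion.imJ_mul, Quaternion.imK_mul, Quaternion.re_star, Quaternion.imI_star,
      Quaternion.imJ_star, Quaternion.imK_star, Quaternion.re_one, Quaternion.imI_one,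
      Quaternion.imJ_one, Quaternion.imK_one, Quaternion.re_zero, Quaternion.imI_zero,
      Quaternion.imJ_zero, Quaternion.imK_zero]

lemma coord_oone (j : Fin 8) : coord j oone = if j = 0 then 1 else 0 := coord_basis8 j 0

lemma omul_basis8_succ_self (i : Fin 7) : omul (basis8 i.succ) (basis8 i.succ) = -oone := by
  fin_cases i <;>
    simp [basis8, omul, oone, Prod.ext_iff, Quaternion.ext_iff, Quaternion.re_mul,
      Quaternion.imI_mul, Quaternion.imJ_mul, Quaternion.imK_mul, Quaternion.re_star,
      Quaternion.imI_star, Quaternion.imJ_star, Quaternion.imK_star, Quaternion.re_one,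
      Quaternion.imI_one, Quaternion.imJ_one, Quaternion.imK_one]

def coordL (i : Fin 8) : O →ₗ[ℝ] ℝ where
  toFun := coord i
  map_add' z w := by fin_cases i <;> simp [coord] <;> ring
  map_smul' c z := by fin_cases i <;> simp [coord]

@[simp] lemma coordL_apply (i : Fin 8) (z : O) : coordL i z = coord i z := rfl

def ZpL (i : Fin 8) : O →L[ℝ] O :=
  LinearMap.toContinuousLinearMap ((coordL i).smulRight oone - (coordL 0).smulRight (basis8 i))

@[simp] lemma ZpL_apply (i : Fin 8) (z : O) : ZpL i z = Zp i z := rfl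

lemma Zp_basis8_zero (i : Fin 7) : Zp i.succ (basis8 0) = -basis8 i.succ := by
  simp [Zp, coord_basis8]

lemma Zp_basis8_succ (i j : Fin 7) : Zp i.succ (basis8 j.succ) = if i = j then oone else 0 := by
  by_cases h : i = j <;> simp [Zp, coord_basis8, h, (Fin.succ_ne_zero j).symm]

lemma omul_basis8_Zp_comm (i : Fin 8) (z : O) :
    omul (basis8 i) (Zp i z) = omul (Zp i z) (basis8 i) := by
  simp only [Zp, omul_sub, sub_omul, omul_smul, smul_omul, omul_one, one_omul]

lemma Zp_succ_sq (i : Fin 7) (z : O) :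
    omul (Zp i.succ z) (Zp i.succ z) =
      (coord i.succ z ^ 2 - coord 0 z ^ 2) • oone -
        (2 * coord 0 z * coord i.succ z) • basis8 i.succ := by
  simp only [Zp, omul_sub, sub_omul, omul_smul, smul_omul, omul_one, one_omul,
    omul_basis8_succ_self]
  match_scalars <;> ring

lemma hasFDerivAt_omul_self (A : O →L[ℝ] O) (z : O) :
    HasFDerivAt (fun z => omul (A z) (A z))
      (omulL.precompR O (A z) A + omulL.precompL O A (A z)) z :=
  omulL.hasFDerivAt_of_bilinear A.hasFDerivAt A.hasFDerivAt

lemma fderiv_Zp_sq_apply (i : Fin 8) (z v : O) :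
    fderiv ℝ (fun z => omul (Zp i z) (Zp i z)) z v =
      omul (Zp i z) (Zp i v) + omul (Zp i v) (Zp i z) := by
  change fderiv ℝ (fun z => omul (ZpL i z) (ZpL i z)) z v = _
  rw [(hasFDerivAt_omul_self (ZpL i) z).fderiv]
  simp

lemma Dleft_fun_sum {ι : Type*} (s : Finset ι) (f : ι → O → O) (z : O)
    (hf : ∀ i ∈ s, DifferentiableAt ℝ (f i) z) :
    Dleft (fun z => ∑ i ∈ s, f i z) z = ∑ i ∈ s, Dleft (f i) z := by
  simp only [Dleft, fderiv_fun_sum hf, sum_apply, omul_sum, Finset.sum_add_distrib]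
  rw [Finset.sum_comm]

lemma Dleft_Zp_succ_sq (i : Fin 7) (z : O) :
    Dleft (fun z => omul (Zp i.succ z) (Zp i.succ z)) z = 0 := by
  have hsucc (j : Fin 7) :
      omul (basis8 j.succ) (fderiv ℝ (fun z => omul (Zp i.succ z) (Zp i.succ z)) z (basis8 j.succ))
        = if i = j then omul (basis8 i.succ) (Zp i.succ z) + omul (basis8 i.succ) (Zp i.succ z)
          else 0 := by
    split_ifs with h <;>
      simp [fderiv_Zp_sq_apply, Zp_basis8_succ, h, omul_one, one_omul, omul_zero, zero_omul,
        omul_add]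
  simp only [Dleft, hsucc, Finset.sum_ite_eq, Finset.mem_univ, if_true]
  simp only [fderiv_Zp_sq_apply, Zp_basis8_zero, omul_neg, neg_omul, omul_basis8_Zp_comm]
  abel

lemma fk_eq_sum_filter (k : ℕ) :
    fk k = fun z => ∑ i ∈ Finset.univ.filter (fun i : Fin 7 => (i : ℕ) + 1 ≤ k),
      omul (Zp i.succ z) (Zp i.succ z) :=
  funext fun _ => (Finset.sum_filter _ _).symm

lemma Dleft_fk (k : ℕ) (z : O) : Dleft (fk k) z = 0 := by
  rw [fk_eq_sum_filter, Dleft_fun_sum _ _ _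
    fun i _ => (hasFDerivAt_omul_self (ZpL i.succ) z).differentiableAt]
  exact Finset.sum_eq_zero fun i _ => Dleft_Zp_succ_sq i z

lemma coord_Zp_succ_sq (i : Fin 7) (j : Fin 8) (z : O) :
    coord j (omul (Zp i.succ z) (Zp i.succ z)) =
      (coord i.succ z ^ 2 - coord 0 z ^ 2) * (if j = 0 then 1 else 0)
        - 2 * coord 0 z * coord i.succ z * (if j = i.succ then 1 else 0) := by
  rw [Zp_succ_sq, ← coordL_apply, map_sub, map_smul, map_smul]
  simp [coord_basis8, coord_oone]

lemma coord_zero_fk (k : ℕ) (z : O) :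
    coord 0 (fk k z) = ∑ i ∈ Finset.univ.filter (fun i : Fin 7 => (i : ℕ) + 1 ≤ k),
      (coord i.succ z ^ 2 - coord 0 z ^ 2) := by
  rw [fk_eq_sum_filter, ← coordL_apply, map_sum]
  simp [coord_Zp_succ_sq, (Fin.succ_ne_zero _).symm]

lemma coord_succ_fk {k : ℕ} {j : Fin 7} (hj : (j : ℕ) + 1 ≤ k) (z : O) :
    coord j.succ (fk k z) = -(2 * coord 0 z * coord j.succ z) := by
  rw [fk_eq_sum_filter, ← coordL_apply, map_sum,
    Finset.sum_eq_single_of_mem j (by simpa using hj)]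
  · simp [coord_Zp_succ_sq, Fin.succ_ne_zero]
  · intro i _ hij
    simp [coord_Zp_succ_sq, Fin.succ_ne_zero, Ne.symm hij]

lemma eq_zero_of_sum_sq_sub_sq_eq_zero {ι : Type*} {s : Finset ι} (hs : s.Nonempty) {a : ℝ}
    {x : ι → ℝ} (hsum : ∑ i ∈ s, (x i ^ 2 - a ^ 2) = 0) (hmul : ∀ i ∈ s, a * x i = 0) :
    a = 0 ∧ ∀ i ∈ s, x i = 0 := by
  have ha : a = 0 := by
    by_contra ha
    have hx : ∀ i ∈ s, x i = 0 := fun i hi => (mul_eq_zero.1 (hmul i hi)).resolve_left ha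
    rw [Finset.sum_congr rfl fun i hi => by rw [hx i hi]] at hsum
    simp only [Finset.sum_const, nsmul_eq_mul, zero_pow two_ne_zero, zero_sub] at hsum
    have : (0 : ℝ) < s.card * a ^ 2 := by have := hs.card_pos; positivity
    linarith
  refine ⟨ha, fun i hi => pow_eq_zero_iff two_ne_zero |>.1 ?_⟩
  simp only [ha, zero_pow two_ne_zero, sub_zero] at hsum
  exact (Finset.sum_eq_zero_iff_of_nonneg fun i _ => sq_nonneg (x i)).1 hsum i hi

lemma fk_eq_zero_of_coord_eq_zero {k : ℕ} {z : O} (h0 : coord 0 z = 0)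
    (hs : ∀ i : Fin 7, (i : ℕ) + 1 ≤ k → coord i.succ z = 0) : fk k z = 0 := by
  refine Finset.sum_eq_zero fun i _ => ?_
  split_ifs with hi
  · simp [Zp, h0, hs i hi, omul_zero]
  · rfl

/-- For 1 ≤ k ≤ 6 the function Z₁² + ⋯ + Z_k² is left monogenic and its zero set is
    exactly the subspace where x₀ = x₁ = ⋯ = x_k = 0, i.e. the span of e_{k+1},…,e₇. -/
theorem zero_set_sum_squares :
    ∀ k : ℕ, 1 ≤ k → k ≤ 6 →
      (∀ z : O, Dleft (fk k) z = 0) ∧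
      (∀ z : O, fk k z = 0 ↔
        (coord 0 z = 0 ∧ ∀ i : Fin 7, (i : ℕ) + 1 ≤ k → coord i.succ z = 0)) := by
  intro k hk _
  refine ⟨Dleft_fk k, fun z => ⟨fun hz => ?_, fun h => fk_eq_zero_of_coord_eq_zero h.1 h.2⟩⟩
  have hcoord (j : Fin 8) : coord j (fk k z) = 0 := by rw [hz, ← coordL_apply, map_zero]
  have hS : (Finset.univ.filter fun i : Fin 7 => (i : ℕ) + 1 ≤ k).Nonempty :=
    ⟨0, Finset.mem_filter.2 ⟨Finset.mem_univ _, hk⟩⟩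
  obtain ⟨h0, hs⟩ := eq_zero_of_sum_sq_sub_sq_eq_zero hS
    ((coord_zero_fk k z).symm.trans (hcoord 0))
    fun i hi => by
      have := (coord_succ_fk (Finset.mem_filter.1 hi).2 z).symm.trans (hcoord i.succ)
      linarith
  exact ⟨h0, fun i hi => hs i (by simpa using hi)⟩
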